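/- Let 0 < γ ≤ 1 and let ρ_k, ρ_r, ρ_f, ρ_jam, M_e > 0 and T_d, T > 0 be constants. Define R(M) = [ (T_d/T)·( log(1 + M^{1+γ} ρ_k ρ_r / ((ρ_f+ρ_jam+1)(ρ_r M^γ + ρ_jam + 1))) − log(1 + M_e ρ_k + M_e M ρ_k ρ_jam/(ρ_r M^γ + ρ_jam + 1)) ) ]⁺. Then for every ε > 0 there exists G(ε) such that for all M ≥ G(ε): R(M)/log M ≥ (T_d/T)·γ − ε. -/

import Mathlib

/-!
For `M ≥ 1` the legitimate SINR grows at least linearly, `userSINR ≥ c₁ M`, because the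
training term `ρ_r M^γ` in its denominator is matched by the factor `M^γ` of `M^{1+γ}`, while
the eavesdropper's term grows at most like `c₂ M^{1-γ}`, because the jamming leakage `M ρ_jam`
is divided by the same `ρ_r M^γ`. Hence the bracket is at least
`(T_d/T) (γ log M - log (c₂/c₁))`, and dividing by `log M → ∞` gives the claim.
-/

open Filter Real

noncomputable section

def userSINR (γ ρk ρr ρf ρjam M : ℝ) : ℝ :=
  M ^ ((1:ℝ) + γ) * ρk * ρr / ((ρf + ρjam + 1) * (ρr * M ^ γ + ρjam + 1))

def eavesdropperLeakage (γ ρk ρr ρjam Me M : ℝ) : ℝ :=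
  1 + Me * ρk + Me * M * ρk * ρjam / (ρr * M ^ γ + ρjam + 1)

end

section RateBounds

variable {γ ρk ρr ρf ρjam Me M : ℝ}

lemma mul_le_userSINR (hγ : 0 ≤ γ) (hρk : 0 ≤ ρk) (hρr : 0 < ρr) (hρf : 0 ≤ ρf)
    (hρjam : 0 ≤ ρjam) (hM : 1 ≤ M) :
    ρk * ρr / ((ρf + ρjam + 1) * (ρr + ρjam + 1)) * M ≤
      userSINR γ ρk ρr ρf ρjam M := by
  have hM0 : 0 < M := by linarith
  have hx : 1 ≤ M ^ γ := one_le_rpow hM hγ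
  have hden : ρr * M ^ γ + ρjam + 1 ≤ M ^ γ * (ρr + ρjam + 1) := by nlinarith
  rw [userSINR, rpow_add hM0, rpow_one, div_mul_eq_mul_div,
    div_le_div_iff₀ (by positivity) (by positivity)]
  nlinarith [mul_le_mul_of_nonneg_left hden
    (show 0 ≤ ρk * ρr * M * (ρf + ρjam + 1) by positivity)]

lemma eavesdropperLeakage_le_mul_rpow (hγ : γ ≤ 1) (hρk : 0 ≤ ρk) (hρr : 0 < ρr)
    (hρjam : 0 ≤ ρjam) (hMe : 0 ≤ Me) (hM : 1 ≤ M) :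
    eavesdropperLeakage γ ρk ρr ρjam Me M ≤
      (1 + Me * ρk + Me * ρk * ρjam / ρr) * M ^ (1 - γ) := by
  have hM0 : 0 < M := by linarith
  have hy : 1 ≤ M ^ (1 - γ) := one_le_rpow hM (by linarith)
  have hsplit : M ^ γ * M ^ (1 - γ) = M := by rw [← rpow_add hM0]; norm_num
  have hjam : Me * M * ρk * ρjam / (ρr * M ^ γ + ρjam + 1) ≤
      Me * ρk * ρjam / ρr * M ^ (1 - γ) := by
    rw [div_mul_eq_mul_div, div_le_div_iff₀ (by positivity) hρr]
    have hc : 0 ≤ Me * ρk * ρjam := by positivity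
    calc Me * M * ρk * ρjam * ρr
        = Me * ρk * ρjam * (ρr * M ^ γ * M ^ (1 - γ)) := by rw [mul_assoc ρr, hsplit]; ring
      _ ≤ Me * ρk * ρjam * M ^ (1 - γ) * (ρr * M ^ γ + ρjam + 1) := by
        nlinarith [mul_nonneg hc (show 0 ≤ M ^ (1 - γ) * (ρjam + 1) by positivity)]
  have hconst : 1 + Me * ρk ≤ (1 + Me * ρk) * M ^ (1 - γ) :=
    le_mul_of_one_le_right (by positivity) hy
  rw [eavesdropperLeakage]
  linarith

lemma le_logb_one_add_userSINR_sub_logb_eavesdropperLeakage {b : ℝ} (hb : 1 < b)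
    (hγ0 : 0 ≤ γ) (hγ1 : γ ≤ 1) (hρk : 0 < ρk) (hρr : 0 < ρr)
    (hρf : 0 ≤ ρf) (hρjam : 0 ≤ ρjam) (hMe : 0 ≤ Me) (hM : 1 ≤ M) :
    γ * logb b M - (logb b (1 + Me * ρk + Me * ρk * ρjam / ρr) -
        logb b (ρk * ρr / ((ρf + ρjam + 1) * (ρr + ρjam + 1)))) ≤
      logb b (1 + userSINR γ ρk ρr ρf ρjam M) -
        logb b (eavesdropperLeakage γ ρk ρr ρjam Me M) := by
  have hM0 : 0 < M := by linarith
  have hc₁ : 0 < ρk * ρr / ((ρf + ρjam + 1) * (ρr + ρjam + 1)) := by positivity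
  have hc₂ : 0 < 1 + Me * ρk + Me * ρk * ρjam / ρr := by positivity
  have huser : logb b (ρk * ρr / ((ρf + ρjam + 1) * (ρr + ρjam + 1))) + logb b M ≤
      logb b (1 + userSINR γ ρk ρr ρf ρjam M) := by
    rw [← logb_mul hc₁.ne' hM0.ne']
    exact logb_le_logb_of_le hb (by positivity)
      ((mul_le_userSINR hγ0 hρk.le hρr hρf hρjam hM).trans (lt_one_add _).le)
  have heve : logb b (eavesdropperLeakage γ ρk ρr ρjam Me M) ≤
      logb b (1 + Me * ρk + Me * ρk * ρjam / ρr) + (1 - γ) * logb b M := by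
    rw [← logb_rpow_eq_mul_logb_of_pos hM0, ← logb_mul hc₂.ne' (rpow_pos_of_pos hM0 _).ne']
    exact logb_le_logb_of_le hb (by unfold eavesdropperLeakage; positivity)
      (eavesdropperLeakage_le_mul_rpow hγ1 hρk.le hρr hρjam hMe hM)
  linarith

end RateBounds

lemma exists_forall_ge_div_logb_ge {b a C ε : ℝ} {f : ℝ → ℝ} (hb : 1 < b) (hε : 0 < ε)
    (hf : ∀ M, 1 ≤ M → a * logb b M - C ≤ f M) :
    ∃ G, ∀ M, G ≤ M → a - ε ≤ max (f M) 0 / logb b M := by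
  obtain ⟨G, hG⟩ := eventually_atTop.mp ((eventually_ge_atTop 1).and
    ((tendsto_logb_atTop hb).eventually_gt_atTop (max 0 (C / ε))))
  refine ⟨G, fun M hM => ?_⟩
  obtain ⟨hM1, hL⟩ := hG M hM
  have hL0 : 0 < logb b M := (le_max_left _ _).trans_lt hL
  have hC : C ≤ ε * logb b M := by
    have := (le_max_right _ _).trans_lt hL
    rw [div_lt_iff₀ hε] at this
    linarith
  rw [le_div_iff₀ hL0]
  nlinarith [hf M hM1, le_max_left (f M) 0]

/-- Theorem 4 (achievable rate under training-phase jamming with hidden pilots):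
for 0 < γ ≤ 1, R(M)/log₂ M ≥ (T_d/T)γ − ε for all sufficiently large M. -/
theorem stmt_13 (γ ρk ρr ρf ρjam Me Td T : ℝ) (hγ0 : 0 < γ) (hγ1 : γ ≤ 1)
    (hρk : 0 < ρk) (hρr : 0 < ρr) (hρf : 0 < ρf) (hρjam : 0 < ρjam)
    (hMe : 0 < Me) (hTd : 0 < Td) (hT : 0 < T) :
    ∀ ε > (0:ℝ), ∃ G : ℝ, ∀ M : ℝ, G ≤ M →
      max ((Td / T) * (Real.logb 2 (1 + M ^ ((1:ℝ) + γ) * ρk * ρr /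
              ((ρf + ρjam + 1) * (ρr * M ^ γ + ρjam + 1)))
          - Real.logb 2 (1 + Me * ρk + Me * M * ρk * ρjam / (ρr * M ^ γ + ρjam + 1)))) 0
        / Real.logb 2 M ≥ (Td / T) * γ - ε := by
  intro ε hε
  have hrate : ∀ M, 1 ≤ M → (Td / T) * γ * logb 2 M -
      (Td / T) * (logb 2 (1 + Me * ρk + Me * ρk * ρjam / ρr) -
        logb 2 (ρk * ρr / ((ρf + ρjam + 1) * (ρr + ρjam + 1)))) ≤
      (Td / T) * (logb 2 (1 + userSINR γ ρk ρr ρf ρjam M) -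
        logb 2 (eavesdropperLeakage γ ρk ρr ρjam Me M)) := fun M hM => by
    rw [mul_assoc, ← mul_sub]
    exact mul_le_mul_of_nonneg_left
      (le_logb_one_add_userSINR_sub_logb_eavesdropperLeakage one_lt_two hγ0.le hγ1 hρk hρr
        hρf.le hρjam.le hMe.le hM) (by positivity)
  exact exists_forall_ge_div_logb_ge one_lt_two hε hrate
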